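/- Suppose A is a connected, simply connected DG commutative algebra (H⁰(A) = ℂ, H¹(A) = 0) whose cohomology H•(A) is k-free on a graded vector space V (i.e., there is a map of graded vector spaces V → H•(A) inducing an algebra morphism S(V) → H•(A) which is an isomorphism in degrees ≤ k and injective in degree k+1). Then there exists a morphism of DG algebras S(V) → A (with zero differential on S(V)) that induces an isomorphism on cohomology in degrees ≤ k and an injection in degree k+1; hence S(V) is a k-minimal model of A and A is k-formal. -/

import Mathlib

/-!
STATEMENT 1: Let A be a connected, simply connected DG commutative algebra
(H⁰(A) = ℂ, H¹(A) = 0) whose cohomology is k-free on a graded vector space V: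
there is a map of graded vector spaces V → H•(A) inducing an algebra morphism
S(V) → H•(A) which is an isomorphism in degrees ≤ k and injective in degree
k + 1.  Then there is a morphism of DG algebras S(V) → A (S(V) with the zero
differential) inducing an isomorphism on cohomology in degrees ≤ k and an
injection in degree k + 1; hence S(V) is a k-minimal model of A and A is
k-formal.

S(V) is represented by a graded algebra (R, 𝒜) free graded-commutative on
generators V concentrated in degrees 2,…,k.  The k-freeness of H•(A) on V is
expressed at the level of closed representatives: a degree-preserving,
cocycle-valued linear map ψ : R → A which is unital and multiplicative modulo
coboundaries (i.e. an algebra morphism S(V) → H•(A)) and which induces an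
isomorphism on cohomology in degrees ≤ k and an injection in degree k + 1.
The conclusion upgrades ψ to a genuine morphism of DG algebras F : S(V) → A
with the same cohomological properties; since S(V) is a minimal algebra
generated in degrees ≤ k, this says exactly that S(V) is a k-minimal model of
A, and (S(V) being also a k-minimal model of H•(A)) that A is k-formal.
-/

noncomputable section

variable {R : Type} [Ring R] [Algebra ℂ R]

/-- `𝒜` is an ℕ-grading of the ℂ-algebra `R`: an internal direct sum
decomposition compatible with the multiplication. -/
def IsGrading (𝒜 : ℕ → Submodule ℂ R) : Prop :=
  DirectSum.IsInternal 𝒜 ∧ (1 : R) ∈ 𝒜 0 ∧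
    ∀ i j : ℕ, ∀ x ∈ 𝒜 i, ∀ y ∈ 𝒜 j, x * y ∈ 𝒜 (i + j)

/-- Graded commutativity: `x y = (-1)^{ij} y x` for homogeneous `x, y` of
degrees `i, j`. -/
def IsGradedComm (𝒜 : ℕ → Submodule ℂ R) : Prop :=
  ∀ i j : ℕ, ∀ x ∈ 𝒜 i, ∀ y ∈ 𝒜 j, x * y = ((-1 : ℂ) ^ (i * j)) • (y * x)

/-- `d` is a differential on the graded algebra `(R, 𝒜)`: degree `+1`,
square zero, and the graded Leibniz rule. -/
def IsDifferential (𝒜 : ℕ → Submodule ℂ R) (d : R →ₗ[ℂ] R) : Prop :=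
  (∀ i : ℕ, ∀ x ∈ 𝒜 i, d x ∈ 𝒜 (i + 1)) ∧ (∀ x : R, d (d x) = 0) ∧
    ∀ i : ℕ, ∀ x ∈ 𝒜 i, ∀ y : R,
      d (x * y) = d x * y + ((-1 : ℂ) ^ i) • (x * d y)

/-- `(R, 𝒜)` is the free graded-commutative algebra `S(V)` on the graded
subspace of generators `V`: it is graded, graded-commutative, and satisfies the
universal property that every degree-preserving linear map from `V` to a
graded-commutative graded algebra extends uniquely to a degree-preserving
algebra morphism. -/
def IsFreeGradedCommOn (𝒜 V : ℕ → Submodule ℂ R) : Prop :=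
  IsGrading 𝒜 ∧ IsGradedComm 𝒜 ∧ (∀ i, V i ≤ 𝒜 i) ∧
    ∀ (R' : Type) [Ring R'] [Algebra ℂ R'] (𝒜' : ℕ → Submodule ℂ R'),
      IsGrading 𝒜' → IsGradedComm 𝒜' →
      ∀ φ : ∀ i : ℕ, (V i) →ₗ[ℂ] R', (∀ (i : ℕ) (v : V i), φ i v ∈ 𝒜' i) →
      ∃! F : R →ₐ[ℂ] R',
        (∀ i : ℕ, ∀ x ∈ 𝒜 i, F x ∈ 𝒜' i) ∧ ∀ (i : ℕ) (v : V i), F v = φ i v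

/-- The augmentation ideal `M⁺ = ⊕_{i>0} Mⁱ` of a graded algebra. -/
def PositivePart (𝒜 : ℕ → Submodule ℂ R) : Submodule ℂ R :=
  ⨆ i : ℕ, ⨆ _ : 0 < i, 𝒜 i

/-- A DG algebra `(R, 𝒜, d)` is minimal: free as a graded-commutative algebra,
`M¹ = 0`, and `d(M) ⊆ M⁺ · M⁺`. -/
def IsMinimal (𝒜 : ℕ → Submodule ℂ R) (d : R →ₗ[ℂ] R) : Prop :=
  (∃ V : ℕ → Submodule ℂ R, IsFreeGradedCommOn 𝒜 V) ∧ 𝒜 1 = ⊥ ∧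
    ∀ x : R, d x ∈ Submodule.span ℂ
      {z : R | ∃ a ∈ PositivePart 𝒜, ∃ b ∈ PositivePart 𝒜, z = a * b}

/-- Connectedness: `H⁰(A) = ℂ`, i.e. the closed elements of degree 0 are the
multiples of 1. -/
def IsConnectedDG (𝒜 : ℕ → Submodule ℂ R) (d : R →ₗ[ℂ] R) : Prop :=
  LinearMap.ker d ⊓ 𝒜 0 = Submodule.span ℂ {(1 : R)}

/-- Simple connectedness: `H¹(A) = 0`, i.e. every closed element of degree 1 is
exact. -/
def IsSimplyConnectedDG (𝒜 : ℕ → Submodule ℂ R) (d : R →ₗ[ℂ] R) : Prop :=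
  ∀ x ∈ 𝒜 1, d x = 0 → ∃ y : R, d y = x

/-- A map `F` between DG algebras induces an injection on degree-`i`
cohomology. -/
def InducesCohomInjAt (𝒜 : ℕ → Submodule ℂ R) (d : R →ₗ[ℂ] R)
    {R' : Type} [Ring R'] [Algebra ℂ R'] (𝒜' : ℕ → Submodule ℂ R')
    (d' : R' →ₗ[ℂ] R') (F : R → R') (i : ℕ) : Prop :=
  ∀ x ∈ 𝒜 i, d x = 0 → (∃ y' : R', d' y' = F x) → ∃ y : R, d y = x

/-- A map `F` between DG algebras induces a surjection on degree-`i`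
cohomology. -/
def InducesCohomSurjAt (𝒜 : ℕ → Submodule ℂ R) (d : R →ₗ[ℂ] R)
    {R' : Type} [Ring R'] [Algebra ℂ R'] (𝒜' : ℕ → Submodule ℂ R')
    (d' : R' →ₗ[ℂ] R') (F : R → R') (i : ℕ) : Prop :=
  ∀ x' ∈ 𝒜' i, d' x' = 0 → ∃ x ∈ 𝒜 i, d x = 0 ∧ ∃ y' : R', d' y' = x' - F x

/-- A map `F` between DG algebras induces an isomorphism on degree-`i`
cohomology. -/
def InducesCohomIsoAt (𝒜 : ℕ → Submodule ℂ R) (d : R →ₗ[ℂ] R)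
    {R' : Type} [Ring R'] [Algebra ℂ R'] (𝒜' : ℕ → Submodule ℂ R')
    (d' : R' →ₗ[ℂ] R') (F : R → R') (i : ℕ) : Prop :=
  InducesCohomInjAt 𝒜 d 𝒜' d' F i ∧ InducesCohomSurjAt 𝒜 d 𝒜' d' F i

/-!
Extend `ψ|V` to an algebra morphism `F : S(V) → A` by freeness. Since `d` is a derivation and
`F` sends the generators to cocycles, `F` lands in cocycles. Modulo coboundaries `ψ` and `F` are
both algebra morphisms `S(V) → H•(A)` which agree on `V`; as the monomials in `V` span `S(V)`,
they agree everywhere, and a map differing from `ψ` by coboundaries induces the same map on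
cohomology.
-/

theorem iSupIndep.comap_of_injective {ι K M N : Type*} [Ring K] [AddCommGroup M] [Module K M]
    [AddCommGroup N] [Module K N] {p : ι → Submodule K N} (hp : iSupIndep p) {f : M →ₗ[K] N}
    (hf : Function.Injective f) : iSupIndep fun i => (p i).comap f := by
  refine fun i => Submodule.disjoint_def.mpr fun x hxi hx => hf ?_
  have hle : (⨆ (j) (_ : j ≠ i), (p j).comap f) ≤ (⨆ (j) (_ : j ≠ i), p j).comap f :=
    iSup₂_le fun j hj => Submodule.comap_mono (le_iSup₂ (f := fun j (_ : j ≠ i) => p j) j hj)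
  rw [map_zero]
  exact Submodule.disjoint_def.mp (hp i) _ hxi (hle hx)

section Grading

variable {𝒜 : ℕ → Submodule ℂ R}

theorem IsGrading.exists_degree_mem_of_mem_closure (h𝒜 : IsGrading 𝒜) (D : AddSubmonoid ℕ)
    {s : Set R} (hs : ∀ x ∈ s, ∃ i ∈ D, x ∈ 𝒜 i) {m : R} (hm : m ∈ Submonoid.closure s) :
    ∃ i ∈ D, m ∈ 𝒜 i := by
  induction hm using Submonoid.closure_induction with
  | mem x hx => exact hs x hx
  | one => exact ⟨0, D.zero_mem, h𝒜.2.1⟩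
  | mul x y _ _ hx hy =>
    obtain ⟨i, hiD, hxi⟩ := hx
    obtain ⟨j, hjD, hyj⟩ := hy
    exact ⟨i + j, D.add_mem hiD hjD, h𝒜.2.2 i j x hxi y hyj⟩

theorem IsGrading.eq_bot_of_span_eq_top (h𝒜 : IsGrading 𝒜) {s : Set R} {j : ℕ}
    (hs : ∀ x ∈ s, ∃ i ≠ j, x ∈ 𝒜 i) (hspan : Submodule.span ℂ s = ⊤) : 𝒜 j = ⊥ := by
  have hother : ⊤ ≤ ⨆ (i) (_ : i ≠ j), 𝒜 i := by
    rw [← hspan, Submodule.span_le]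
    intro x hx
    obtain ⟨i, hij, hxi⟩ := hs x hx
    exact Submodule.mem_iSup_of_mem i (Submodule.mem_iSup_of_mem hij hxi)
  exact disjoint_top.mp ((h𝒜.1.submodule_iSupIndep j).mono_right hother)

theorem IsGrading.comap_adjoin (h𝒜 : IsGrading 𝒜) {s : Set R} (hs : ∀ x ∈ s, ∃ i, x ∈ 𝒜 i) :
    IsGrading fun i => (𝒜 i).comap (Algebra.adjoin ℂ s).val.toLinearMap := by
  set S := Algebra.adjoin ℂ s
  have hspan : S.toSubmodule ≤ (⨆ i, (𝒜 i).comap S.val.toLinearMap).map S.val.toLinearMap := by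
    rw [Algebra.adjoin_eq_span, Submodule.span_le]
    intro m hm
    obtain ⟨i, -, hmi⟩ :=
      h𝒜.exists_degree_mem_of_mem_closure ⊤ (fun x hx => (hs x hx).imp fun i h => ⟨trivial, h⟩) hm
    exact ⟨⟨m, Submonoid.closure_le.mpr Algebra.subset_adjoin hm⟩,
      Submodule.mem_iSup_of_mem i hmi, rfl⟩
  refine ⟨DirectSum.isInternal_submodule_of_iSupIndep_of_iSup_eq_top
      (h𝒜.1.submodule_iSupIndep.comap_of_injective Subtype.val_injective) ?_,
    h𝒜.2.1, fun i j x hx y hy => h𝒜.2.2 i j x hx y hy⟩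
  refine eq_top_iff.mpr fun t _ => ?_
  obtain ⟨u, hu, hut⟩ := hspan t.2
  rwa [Subtype.ext hut] at hu

theorem IsGradedComm.comap_subalgebra (h𝒜 : IsGradedComm 𝒜) (S : Subalgebra ℂ R) :
    IsGradedComm fun i => (𝒜 i).comap S.val.toLinearMap :=
  fun i j x hx y hy => Subtype.ext (h𝒜 i j x hx y hy)

end Grading

namespace IsDifferential

variable {𝒜 : ℕ → Submodule ℂ R} {d : R →ₗ[ℂ] R}

theorem map_one (hd : IsDifferential 𝒜 d) (h1 : (1 : R) ∈ 𝒜 0) : d 1 = 0 := by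
  simpa using hd.2.2 0 1 h1 1

theorem map_mul_of_map_right_eq_zero (hd : IsDifferential 𝒜 d) (h𝒜 : ⨆ i, 𝒜 i = ⊤) {c : R}
    (hc : d c = 0) (z : R) : d (z * c) = d z * c := by
  have hz : z ∈ ⨆ i, 𝒜 i := h𝒜 ▸ Submodule.mem_top
  induction hz using Submodule.iSup_induction' with
  | mem i x hx => simp [hd.2.2 i x hx c, hc]
  | zero => simp
  | add x y _ _ hx hy => simp only [add_mul, map_add, hx, hy]

theorem mul_map_mem_range (hd : IsDifferential 𝒜 d) {i : ℕ} {c : R} (hci : c ∈ 𝒜 i)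
    (hc : d c = 0) (b : R) : c * d b ∈ LinearMap.range d := by
  refine ⟨((-1 : ℂ) ^ i) • (c * b), ?_⟩
  rw [map_smul, hd.2.2 i c hci b, hc, zero_mul, zero_add, smul_smul, ← mul_pow]
  norm_num

theorem map_mul_mem_range (hd : IsDifferential 𝒜 d) (h𝒜 : ⨆ i, 𝒜 i = ⊤) {c : R}
    (hc : d c = 0) (b : R) : d b * c ∈ LinearMap.range d :=
  ⟨b * c, hd.map_mul_of_map_right_eq_zero h𝒜 hc b⟩

end IsDifferential

section Cohomology

variable {𝒜 : ℕ → Submodule ℂ R} {d : R →ₗ[ℂ] R} {R' : Type} [Ring R'] [Algebra ℂ R']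
  {𝒜' : ℕ → Submodule ℂ R'} {d' : R' →ₗ[ℂ] R'} {ψ F : R → R'} {i : ℕ}

theorem InducesCohomInjAt.of_sub_mem_range (h : InducesCohomInjAt 𝒜 d 𝒜' d' ψ i)
    (hψF : ∀ x, ψ x - F x ∈ LinearMap.range d') : InducesCohomInjAt 𝒜 d 𝒜' d' F i := by
  rintro x hx hdx ⟨y', hy'⟩
  obtain ⟨a, ha⟩ := hψF x
  exact h x hx hdx ⟨y' + a, by rw [map_add, hy', ha, add_sub_cancel]⟩

theorem InducesCohomSurjAt.of_sub_mem_range (h : InducesCohomSurjAt 𝒜 d 𝒜' d' ψ i)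
    (hψF : ∀ x, ψ x - F x ∈ LinearMap.range d') : InducesCohomSurjAt 𝒜 d 𝒜' d' F i := by
  intro x' hx' hdx'
  obtain ⟨x, hx, hdx, y', hy'⟩ := h x' hx' hdx'
  obtain ⟨a, ha⟩ := hψF x
  exact ⟨x, hx, hdx, y' + a, by rw [map_add, hy', ha, sub_add_sub_cancel]⟩

theorem InducesCohomIsoAt.of_sub_mem_range (h : InducesCohomIsoAt 𝒜 d 𝒜' d' ψ i)
    (hψF : ∀ x, ψ x - F x ∈ LinearMap.range d') : InducesCohomIsoAt 𝒜 d 𝒜' d' F i :=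
  ⟨h.1.of_sub_mem_range hψF, h.2.of_sub_mem_range hψF⟩

end Cohomology

namespace IsFreeGradedCommOn

variable {𝒜 V : ℕ → Submodule ℂ R} {R' : Type} [Ring R'] [Algebra ℂ R']
  {𝒜' : ℕ → Submodule ℂ R'} {d' : R' →ₗ[ℂ] R'}

theorem adjoin_eq_top (hfree : IsFreeGradedCommOn 𝒜 V) :
    Algebra.adjoin ℂ (⋃ i, (V i : Set R)) = ⊤ := by
  obtain ⟨hgr, hgc, hV𝒜, huniv⟩ := hfree
  set S := Algebra.adjoin ℂ (⋃ i, (V i : Set R))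
  have hgen : ∀ (i : ℕ) (v : V i), (v : R) ∈ S :=
    fun i v => Algebra.subset_adjoin (Set.mem_iUnion.mpr ⟨i, v.2⟩)
  obtain ⟨G, ⟨hG, hGV⟩, -⟩ := huniv S _
    (hgr.comap_adjoin fun x hx => (Set.mem_iUnion.mp hx).imp fun i h => hV𝒜 i h)
    (hgc.comap_subalgebra S)
    (fun i => ((V i).subtype).codRestrict S.toSubmodule (hgen i)) (fun i v => hV𝒜 i v.2)
  obtain ⟨_, -, huniq⟩ := huniv R 𝒜 hgr hgc (fun i => (V i).subtype) (fun i v => hV𝒜 i v.2)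
  -- `S.val ∘ G` and the identity both extend the inclusion of the generators.
  have hGid : S.val.comp G = AlgHom.id ℂ R :=
    (huniq _ ⟨hG, fun i v => congrArg Subtype.val (hGV i v)⟩).trans
      (huniq _ ⟨fun _ _ hx => hx, fun _ _ => rfl⟩).symm
  refine eq_top_iff.mpr fun x _ => ?_
  have hx : S.val (G x) = x := AlgHom.congr_fun hGid x
  exact hx ▸ (G x).2

theorem span_closure_eq_top (hfree : IsFreeGradedCommOn 𝒜 V) :
    Submodule.span ℂ (Submonoid.closure (⋃ i, (V i : Set R)) : Set R) = ⊤ := by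
  rw [← Algebra.adjoin_eq_span, hfree.adjoin_eq_top, Algebra.top_toSubmodule]

theorem exists_mem_of_mem_closure (hfree : IsFreeGradedCommOn 𝒜 V) {m : R}
    (hm : m ∈ Submonoid.closure (⋃ i, (V i : Set R))) : ∃ i, m ∈ 𝒜 i := by
  obtain ⟨i, -, hmi⟩ := hfree.1.exists_degree_mem_of_mem_closure ⊤
    (fun v hv => (Set.mem_iUnion.mp hv).imp fun i h => ⟨trivial, hfree.2.2.1 i h⟩) hm
  exact ⟨i, hmi⟩

theorem eq_bot_of_pos_of_lt (hfree : IsFreeGradedCommOn 𝒜 V) {n : ℕ}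
    (hV : ∀ i, 0 < i → i < n → V i = ⊥) {j : ℕ} (hj : 0 < j) (hjn : j < n) : 𝒜 j = ⊥ := by
  let D : AddSubmonoid ℕ :=
    { carrier := {i | i = 0 ∨ n ≤ i}
      zero_mem' := Or.inl rfl
      add_mem' := by
        rintro a b (ha | ha) (hb | hb) <;> simp only [Set.mem_ofPred_eq] <;> omega }
  have hgen : ∀ x ∈ ⋃ i, (V i : Set R), ∃ i ∈ D, x ∈ 𝒜 i := by
    intro x hx
    obtain ⟨i, hxi⟩ := Set.mem_iUnion.mp hx
    by_cases hi : 0 < i ∧ i < n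
    · rw [hV i hi.1 hi.2, Submodule.bot_coe, Set.mem_singleton_iff] at hxi
      exact ⟨0, Or.inl rfl, hxi ▸ zero_mem _⟩
    · exact ⟨i, show i = 0 ∨ n ≤ i by omega, hfree.2.2.1 i hxi⟩
  refine hfree.1.eq_bot_of_span_eq_top (fun m hm => ?_) hfree.span_closure_eq_top
  obtain ⟨i, hiD, hmi⟩ := hfree.1.exists_degree_mem_of_mem_closure D hgen hm
  exact ⟨i, by rintro rfl; rcases hiD with h | h <;> omega, hmi⟩

theorem adjoin_homogeneous_le_eq_top (hfree : IsFreeGradedCommOn 𝒜 V) {k : ℕ}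
    (hV : ∀ i, k < i → V i = ⊥) : Algebra.adjoin ℂ {x : R | ∃ i ≤ k, x ∈ 𝒜 i} = ⊤ := by
  refine eq_top_iff.mpr (hfree.adjoin_eq_top ▸ Algebra.adjoin_mono ?_)
  intro x hx
  obtain ⟨i, hxi⟩ := Set.mem_iUnion.mp hx
  by_cases hi : k < i
  · rw [hV i hi, Submodule.bot_coe, Set.mem_singleton_iff] at hxi
    exact ⟨0, k.zero_le, hxi ▸ zero_mem _⟩
  · exact ⟨i, not_lt.mp hi, hfree.2.2.1 i hxi⟩

theorem submodule_eq_top_of_closure_subset (hfree : IsFreeGradedCommOn 𝒜 V) {p : Submodule ℂ R}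
    (hp : ∀ m ∈ Submonoid.closure (⋃ i, (V i : Set R)), m ∈ p) : p = ⊤ :=
  eq_top_iff.mpr (hfree.span_closure_eq_top ▸ Submodule.span_le.mpr hp)

theorem map_eq_zero_of_generators (hfree : IsFreeGradedCommOn 𝒜 V) (hd' : IsDifferential 𝒜' d')
    (h1' : (1 : R') ∈ 𝒜' 0) {F : R →ₐ[ℂ] R'} (hF : ∀ i, ∀ x ∈ 𝒜 i, F x ∈ 𝒜' i)
    (hFV : ∀ i, ∀ v ∈ V i, d' (F v) = 0) (x : R) : d' (F x) = 0 := by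
  suffices h : LinearMap.ker (d' ∘ₗ F.toLinearMap) = ⊤ from
    LinearMap.mem_ker.mp (h ▸ Submodule.mem_top : x ∈ _)
  refine hfree.submodule_eq_top_of_closure_subset fun m hm => LinearMap.mem_ker.mpr ?_
  induction hm using Submonoid.closure_induction with
  | mem v hv =>
    obtain ⟨i, hvi⟩ := Set.mem_iUnion.mp hv
    exact hFV i v hvi
  | one => simpa using hd'.map_one h1'
  | mul x y hx _ hdx hdy =>
    obtain ⟨i, hxi⟩ := hfree.exists_mem_of_mem_closure hx
    simp only [LinearMap.coe_comp, AlgHom.toLinearMap_apply, Function.comp_apply] at hdx hdy ⊢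
    simp [hd'.2.2 i (F x) (hF i x hxi), hdx, hdy]

theorem sub_mem_range_of_generators (hfree : IsFreeGradedCommOn 𝒜 V) (hd' : IsDifferential 𝒜' d')
    (h𝒜' : ⨆ i, 𝒜' i = ⊤) {ψ : R →ₗ[ℂ] R'} (hψ : ∀ i, ∀ x ∈ 𝒜 i, ψ x ∈ 𝒜' i)
    (hψd : ∀ x, d' (ψ x) = 0) (hψ1 : ψ 1 - 1 ∈ LinearMap.range d')
    (hψmul : ∀ x y, ψ (x * y) - ψ x * ψ y ∈ LinearMap.range d') {F : R →ₐ[ℂ] R'}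
    (hFd : ∀ x, d' (F x) = 0) (hFV : ∀ i, ∀ v ∈ V i, F v = ψ v) (x : R) :
    ψ x - F x ∈ LinearMap.range d' := by
  suffices h : (LinearMap.range d').comap (ψ - F.toLinearMap) = ⊤ from
    (h ▸ Submodule.mem_top : x ∈ _)
  refine hfree.submodule_eq_top_of_closure_subset fun m hm => ?_
  simp only [Submodule.mem_comap, LinearMap.sub_apply, AlgHom.toLinearMap_apply]
  induction hm using Submonoid.closure_induction with
  | mem v hv =>
    obtain ⟨i, hvi⟩ := Set.mem_iUnion.mp hv
    simp [hFV i v hvi]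
  | one => simpa using hψ1
  | mul x y hx _ hψFx hψFy =>
    obtain ⟨i, hxi⟩ := hfree.exists_mem_of_mem_closure hx
    obtain ⟨a, ha⟩ := hψFx
    obtain ⟨b, hb⟩ := hψFy
    have hsplit : ψ (x * y) - F (x * y) =
        (ψ (x * y) - ψ x * ψ y) + (ψ x * d' b + d' a * F y) := by
      rw [ha, hb, map_mul F]
      noncomm_ring
    rw [hsplit]
    exact add_mem (hψmul x y) (add_mem (hd'.mul_map_mem_range (hψ i x hxi) (hψd x) b)
      (hd'.map_mul_mem_range h𝒜' (hFd y) a))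

end IsFreeGradedCommOn

theorem kFree_cohomology_implies_kFormal_general
    {R : Type} [Ring R] [Algebra ℂ R] (𝒜 V : ℕ → Submodule ℂ R)
    (k : ℕ) (hV : ∀ i : ℕ, i < 2 ∨ k < i → V i = ⊥)
    (hfree : IsFreeGradedCommOn 𝒜 V)
    {R' : Type} [Ring R'] [Algebra ℂ R'] (𝒜' : ℕ → Submodule ℂ R')
    (d' : R' →ₗ[ℂ] R')
    (hgr' : IsGrading 𝒜') (hgc' : IsGradedComm 𝒜') (hd' : IsDifferential 𝒜' d')
    -- k-freeness of H•(A) on V, at the level of closed representatives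
    (hkfree : ∃ ψ : R →ₗ[ℂ] R',
      (∀ i : ℕ, ∀ x ∈ 𝒜 i, ψ x ∈ 𝒜' i) ∧
      (∀ x : R, d' (ψ x) = 0) ∧
      (ψ 1 - 1 ∈ LinearMap.range d') ∧
      (∀ x y : R, ψ (x * y) - ψ x * ψ y ∈ LinearMap.range d') ∧
      (∀ i ≤ k, InducesCohomIsoAt 𝒜 (0 : R →ₗ[ℂ] R) 𝒜' d' ψ i) ∧
      InducesCohomInjAt 𝒜 (0 : R →ₗ[ℂ] R) 𝒜' d' ψ (k + 1)) :
    -- S(V) is minimal and generated in degrees ≤ k …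
    IsMinimal 𝒜 (0 : R →ₗ[ℂ] R) ∧
    (Algebra.adjoin ℂ {x : R | ∃ i ≤ k, x ∈ 𝒜 i} = ⊤) ∧
    -- … and there is a genuine DG algebra morphism S(V) → A which is an
    -- isomorphism on cohomology in degrees ≤ k and injective in degree k+1,
    -- i.e. S(V) is a k-minimal model of A and A is k-formal
    ∃ F : R →ₐ[ℂ] R',
      (∀ i : ℕ, ∀ x ∈ 𝒜 i, F x ∈ 𝒜' i) ∧
      (∀ x : R, d' (F x) = 0) ∧
      (∀ i ≤ k, InducesCohomIsoAt 𝒜 (0 : R →ₗ[ℂ] R) 𝒜' d' F i) ∧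
      InducesCohomInjAt 𝒜 (0 : R →ₗ[ℂ] R) 𝒜' d' F (k + 1) := by
  obtain ⟨ψ, hψ, hψd, hψ1, hψmul, hψiso, hψinj⟩ := hkfree
  obtain ⟨-, -, hV𝒜, huniv⟩ := id hfree
  obtain ⟨F, ⟨hF, hFV⟩, -⟩ := huniv R' 𝒜' hgr' hgc' (fun i => ψ ∘ₗ (V i).subtype)
    (fun i v => hψ i v (hV𝒜 i v.2))
  have hFd : ∀ x, d' (F x) = 0 :=
    hfree.map_eq_zero_of_generators hd' hgr'.2.1 hF fun i v hv =>
      (congrArg d' (hFV i ⟨v, hv⟩)).trans (hψd v)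
  have hψF : ∀ x, ψ x - F x ∈ LinearMap.range d' :=
    hfree.sub_mem_range_of_generators hd' hgr'.1.submodule_iSup_eq_top hψ hψd hψ1 hψmul hFd
      fun i v hv => hFV i ⟨v, hv⟩
  refine ⟨⟨⟨V, hfree⟩, hfree.eq_bot_of_pos_of_lt (n := 2) (fun i _ hi => hV i (.inl hi)) one_pos
      one_lt_two, fun _ => zero_mem _⟩,
    hfree.adjoin_homogeneous_le_eq_top fun i hi => hV i (.inr hi),
    F, hF, hFd, fun i hi => (hψiso i hi).of_sub_mem_range hψF, hψinj.of_sub_mem_range hψF⟩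

/-- If the cohomology of a connected simply connected DG algebra `A` is
`k`-free on `V`, then `S(V)` is a `k`-minimal model of `A`, and `A` is
`k`-formal. -/
theorem kFree_cohomology_implies_kFormal
    {R : Type} [Ring R] [Algebra ℂ R] (𝒜 V : ℕ → Submodule ℂ R)
    (k : ℕ) (hV : ∀ i : ℕ, i < 2 ∨ k < i → V i = ⊥)
    (hfree : IsFreeGradedCommOn 𝒜 V)
    {R' : Type} [Ring R'] [Algebra ℂ R'] (𝒜' : ℕ → Submodule ℂ R')
    (d' : R' →ₗ[ℂ] R')
    (hgr' : IsGrading 𝒜') (hgc' : IsGradedComm 𝒜') (hd' : IsDifferential 𝒜' d')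
    (hconn : IsConnectedDG 𝒜' d') (hsimp : IsSimplyConnectedDG 𝒜' d')
    -- k-freeness of H•(A) on V, at the level of closed representatives
    (hkfree : ∃ ψ : R →ₗ[ℂ] R',
      (∀ i : ℕ, ∀ x ∈ 𝒜 i, ψ x ∈ 𝒜' i) ∧
      (∀ x : R, d' (ψ x) = 0) ∧
      (ψ 1 - 1 ∈ LinearMap.range d') ∧
      (∀ x y : R, ψ (x * y) - ψ x * ψ y ∈ LinearMap.range d') ∧
      (∀ i ≤ k, InducesCohomIsoAt 𝒜 (0 : R →ₗ[ℂ] R) 𝒜' d' ψ i) ∧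
      InducesCohomInjAt 𝒜 (0 : R →ₗ[ℂ] R) 𝒜' d' ψ (k + 1)) :
    -- S(V) is minimal and generated in degrees ≤ k …
    IsMinimal 𝒜 (0 : R →ₗ[ℂ] R) ∧
    (Algebra.adjoin ℂ {x : R | ∃ i ≤ k, x ∈ 𝒜 i} = ⊤) ∧
    -- … and there is a genuine DG algebra morphism S(V) → A which is an
    -- isomorphism on cohomology in degrees ≤ k and injective in degree k+1,
    -- i.e. S(V) is a k-minimal model of A and A is k-formal
    ∃ F : R →ₐ[ℂ] R',
      (∀ i : ℕ, ∀ x ∈ 𝒜 i, F x ∈ 𝒜' i) ∧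
      (∀ x : R, d' (F x) = 0) ∧
      (∀ i ≤ k, InducesCohomIsoAt 𝒜 (0 : R →ₗ[ℂ] R) 𝒜' d' F i) ∧
      InducesCohomInjAt 𝒜 (0 : R →ₗ[ℂ] R) 𝒜' d' F (k + 1) :=
  kFree_cohomology_implies_kFormal_general 𝒜 V k hV hfree 𝒜' d' hgr' hgc' hd' hkfree
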